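/- arXiv:2205.01257 — 3 statements merged into one kernel-verified Lean document; each statement's English description precedes it below -/
import Mathlib

section
/- Let d ≥ 1, T ≥ 1, let x_1, …, x_T ∈ ℝ^d, and let λ > 0. Then det( V_T(λ) ) = λ^d · Π_{t=1}^T ( 1 + x_tᵀ V_{t-1}(λ)⁻¹ x_t ). -/
/-!
Adding the rank-one matrix `u vᵀ` to an invertible `A` multiplies its determinant by
`1 + vᵀ A⁻¹ u` (the matrix determinant lemma). Since `V_t = V_{t-1} + x_t x_tᵀ`, applying this
once per step telescopes `det V_T` down to `det V_0 = λ^d`. Each `V_t` is invertible because it is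
`λ I` plus a sum of positive semidefinite matrices, hence positive definite.
-/

open Matrix

namespace Matrix

section DeterminantLemma

variable {n R : Type*} [Fintype n] [DecidableEq n] [CommRing R]

theorem det_add_vecMulVec {A : Matrix n n R} (hA : IsUnit A.det) (u v : n → R) :
    (A + vecMulVec u v).det = A.det * (1 + v ⬝ᵥ A⁻¹ *ᵥ u) := by
  rw [vecMulVec_eq Unit, det_add_replicateCol_mul_replicateRow hA, det_unique (n := Unit),
    Matrix.add_apply, one_apply_eq, Matrix.mul_assoc, ← replicateCol_mulVec,
    replicateRow_mul_replicateCol_apply]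

theorem det_eq_det_zero_mul_prod_of_add_vecMulVec {V : ℕ → Matrix n n R} {u v : ℕ → n → R}
    (hV : ∀ k, V (k + 1) = V k + vecMulVec (u (k + 1)) (v (k + 1)))
    (hunit : ∀ k, IsUnit (V k).det) (T : ℕ) :
    (V T).det = (V 0).det * ∏ t ∈ Finset.Icc 1 T, (1 + v t ⬝ᵥ (V (t - 1))⁻¹ *ᵥ u t) := by
  induction T with
  | zero => simp
  | succ k ih =>
    rw [hV, det_add_vecMulVec (hunit k), ih, Finset.prod_Icc_succ_top (Nat.le_add_left 1 k),
      Nat.add_sub_cancel, mul_assoc]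

end DeterminantLemma

theorem posDef_smul_one_add_sum_vecMulVec_self {n ι : Type*} [Fintype n] [DecidableEq n]
    {lam : ℝ} (hlam : 0 < lam) (s : Finset ι) (x : ι → n → ℝ) :
    (lam • (1 : Matrix n n ℝ) + ∑ i ∈ s, vecMulVec (x i) (x i)).PosDef :=
  (PosDef.one.smul hlam).add_posSemidef
    (posSemidef_sum s fun i _ => posSemidef_vecMulVec_self_star (x i))

end Matrix

theorem det_product_identity_general (d T : ℕ)
    (x : ℕ → Fin d → ℝ)
    (lam : ℝ) (hlam : 0 < lam)
    (V : ℕ → Matrix (Fin d) (Fin d) ℝ)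
    (hV : ∀ k, V k = lam • (1 : Matrix (Fin d) (Fin d) ℝ)
        + ∑ s ∈ Finset.Icc 1 k, Matrix.vecMulVec (x s) (x s)) :
    (V T).det = lam ^ d * ∏ t ∈ Finset.Icc 1 T, (1 + x t ⬝ᵥ (V (t - 1))⁻¹ *ᵥ x t) := by
  have hstep : ∀ k, V (k + 1) = V k + vecMulVec (x (k + 1)) (x (k + 1)) := fun k => by
    rw [hV, hV, Finset.sum_Icc_succ_top (Nat.le_add_left 1 k), add_assoc]
  have hunit : ∀ k, IsUnit (V k).det := fun k => by
    rw [hV k]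
    exact (posDef_smul_one_add_sum_vecMulVec_self hlam _ x).det_pos.ne'.isUnit
  rw [det_eq_det_zero_mul_prod_of_add_vecMulVec hstep hunit, hV 0]
  simp

/-- Determinant-trace identity for the design matrix. -/
theorem det_product_identity (d T : ℕ) (hd : 1 ≤ d) (hT : 1 ≤ T)
    (x : ℕ → Fin d → ℝ)
    (lam : ℝ) (hlam : 0 < lam)
    (V : ℕ → Matrix (Fin d) (Fin d) ℝ)
    (hV : ∀ k, V k = lam • (1 : Matrix (Fin d) (Fin d) ℝ)
        + ∑ s ∈ Finset.Icc 1 k, Matrix.vecMulVec (x s) (x s)) :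
    (V T).det = lam ^ d * ∏ t ∈ Finset.Icc 1 T, (1 + x t ⬝ᵥ (V (t - 1))⁻¹ *ᵥ x t) :=
  det_product_identity_general d T x lam hlam V hV
end

section
/- (Elliptical potential lemma, bounded-potential case) Let d ≥ 1, T ≥ 1, let x_1, …, x_T ∈ ℝ^d with ‖x_t‖₂ ≤ 1 for all t, and let λ > 0. If x_tᵀ V_{t-1}(λ)⁻¹ x_t ≤ 1 for every t ∈ [T], then Σ_{t=1}^T x_tᵀ V_{t-1}(λ)⁻¹ x_t ≤ 2 d · log( 1 + T/(d·λ) ). -/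
/-!
By the matrix determinant lemma, `det V_t = det V_{t-1} * (1 + x_tᵀ V_{t-1}⁻¹ x_t)`, so the
product of the `1 + x_tᵀ V_{t-1}⁻¹ x_t` equals `det V_T / λ^d`. AM-GM on the eigenvalues of
`V_T` gives `det V_T ≤ (tr V_T / d)^d ≤ (λ + T/d)^d`, hence that product is at most
`(1 + T/(dλ))^d`. Taking logarithms and using `u ≤ 2 log (1 + u)` for `0 ≤ u ≤ 1` bounds the
sum.
-/

open Matrix Finset

theorem Real.le_two_mul_log_one_add {u : ℝ} (h0 : 0 ≤ u) (h2 : u ≤ 2) :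
    u ≤ 2 * Real.log (1 + u) := by
  have := Real.le_log_one_add_of_nonneg h0
  rw [div_le_iff₀ (by linarith)] at this
  nlinarith

theorem Finset.prod_le_sum_div_card_pow {ι : Type*} (s : Finset ι) (z : ι → ℝ)
    (hz : ∀ i ∈ s, 0 ≤ z i) : ∏ i ∈ s, z i ≤ ((∑ i ∈ s, z i) / #s) ^ #s := by
  rcases s.eq_empty_or_nonempty with rfl | hs
  · simp
  have hcard : (0 : ℝ) < #s := by exact_mod_cast hs.card_pos
  have amgm := Real.geom_mean_le_arith_mean s 1 z (by simp) (by simpa using hcard) hz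
  simp only [Pi.one_apply, Real.rpow_one, sum_const, nsmul_eq_mul, mul_one, one_mul] at amgm
  calc ∏ i ∈ s, z i = ((∏ i ∈ s, z i) ^ ((#s : ℝ)⁻¹)) ^ #s := by
        rw [← Real.rpow_natCast, ← Real.rpow_mul (prod_nonneg hz), inv_mul_cancel₀ hcard.ne',
          Real.rpow_one]
    _ ≤ ((∑ i ∈ s, z i) / #s) ^ #s :=
        pow_le_pow_left₀ (Real.rpow_nonneg (prod_nonneg hz) _) amgm _

theorem Matrix.PosSemidef.det_le_trace_div_card_pow {n : Type*} [Fintype n] [DecidableEq n]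
    {A : Matrix n n ℝ} (hA : A.PosSemidef) :
    A.det ≤ (A.trace / Fintype.card n) ^ Fintype.card n := by
  rw [hA.1.det_eq_prod_eigenvalues, hA.1.trace_eq_sum_eigenvalues]
  simpa using prod_le_sum_div_card_pow univ _ fun i _ => hA.eigenvalues_nonneg i

theorem Matrix.det_add_vecMulVec_s8 {K n : Type*} [Field K] [Fintype n] [DecidableEq n]
    {A : Matrix n n K} (hA : IsUnit A.det) (u v : n → K) :
    (A + vecMulVec u v).det = A.det * (1 + v ⬝ᵥ A⁻¹ *ᵥ u) := by
  rw [vecMulVec_eq Unit, det_add_replicateCol_mul_replicateRow hA, det_unique (1 + _),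
    Matrix.add_apply, Matrix.mul_assoc, ← replicateCol_mulVec,
    replicateRow_mul_replicateCol_apply, one_apply_eq]

theorem Matrix.det_eq_det_zero_mul_prod_of_add_vecMulVec_s8 {K n : Type*} [Field K] [Fintype n]
    [DecidableEq n] {V : ℕ → Matrix n n K} {u v : ℕ → n → K}
    (hV : ∀ k, V (k + 1) = V k + vecMulVec (u (k + 1)) (v (k + 1)))
    (hunit : ∀ k, IsUnit (V k).det) (N : ℕ) :
    (V N).det = (V 0).det * ∏ t ∈ Icc 1 N, (1 + v t ⬝ᵥ (V (t - 1))⁻¹ *ᵥ u t) := by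
  induction N with
  | zero => simp
  | succ N ih =>
    rw [hV, det_add_vecMulVec_s8 (hunit N), ih, prod_Icc_succ_top (by omega), Nat.add_sub_cancel,
      mul_assoc]

section Gram

variable {ι n : Type*} [Fintype n] [DecidableEq n]

theorem Matrix.posDef_smul_one_add_sum_vecMulVec_self_s8 (s : Finset ι) (x : ι → n → ℝ)
    {lam : ℝ} (hlam : 0 < lam) :
    (lam • (1 : Matrix n n ℝ) + ∑ i ∈ s, vecMulVec (x i) (x i)).PosDef :=
  (PosDef.one.smul hlam).add_posSemidef <|
    posSemidef_sum s fun i _ => by simpa using posSemidef_vecMulVec_self_star (x i)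

theorem Matrix.trace_smul_one_add_sum_vecMulVec_self (s : Finset ι) (x : ι → n → ℝ)
    (lam : ℝ) :
    (lam • (1 : Matrix n n ℝ) + ∑ i ∈ s, vecMulVec (x i) (x i)).trace
      = Fintype.card n * lam + ∑ i ∈ s, x i ⬝ᵥ x i := by
  simp [trace_sum, mul_comm]

theorem Matrix.det_smul_one_add_sum_vecMulVec_self_eq_prod {x : ℕ → n → ℝ} {lam : ℝ}
    (hlam : 0 < lam) {V : ℕ → Matrix n n ℝ}
    (hV : ∀ k, V k = lam • (1 : Matrix n n ℝ) + ∑ s ∈ Icc 1 k, vecMulVec (x s) (x s))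
    (N : ℕ) :
    (V N).det
      = lam ^ Fintype.card n * ∏ t ∈ Icc 1 N, (1 + x t ⬝ᵥ (V (t - 1))⁻¹ *ᵥ x t) := by
  have hstep (k : ℕ) : V (k + 1) = V k + vecMulVec (x (k + 1)) (x (k + 1)) := by
    rw [hV, hV, sum_Icc_succ_top (by omega), add_assoc]
  have hunit (k : ℕ) : IsUnit (V k).det :=
    (hV k ▸ posDef_smul_one_add_sum_vecMulVec_self_s8 _ x hlam).det_pos.ne'.isUnit
  rw [det_eq_det_zero_mul_prod_of_add_vecMulVec_s8 hstep hunit, hV 0]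
  simp

theorem Matrix.prod_one_add_dotProduct_inv_mulVec_le [Nonempty n] {x : ℕ → n → ℝ}
    {lam : ℝ} (hlam : 0 < lam) {V : ℕ → Matrix n n ℝ}
    (hV : ∀ k, V k = lam • (1 : Matrix n n ℝ) + ∑ s ∈ Icc 1 k, vecMulVec (x s) (x s))
    {T : ℕ} (hx : ∀ t ∈ Icc 1 T, x t ⬝ᵥ x t ≤ 1) :
    ∏ t ∈ Icc 1 T, (1 + x t ⬝ᵥ (V (t - 1))⁻¹ *ᵥ x t)
      ≤ (1 + T / (Fintype.card n * lam)) ^ Fintype.card n := by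
  have hd : (Fintype.card n : ℝ) ≠ 0 := by positivity
  have hVT : (V T).PosSemidef :=
    (hV T ▸ posDef_smul_one_add_sum_vecMulVec_self_s8 _ x hlam).posSemidef
  have htrace : (V T).trace ≤ Fintype.card n * lam + T := by
    rw [hV, trace_smul_one_add_sum_vecMulVec_self]
    grw [sum_le_sum hx]
    simp
  refine le_of_mul_le_mul_left ?_ (pow_pos hlam (Fintype.card n))
  calc lam ^ Fintype.card n * ∏ t ∈ Icc 1 T, (1 + x t ⬝ᵥ (V (t - 1))⁻¹ *ᵥ x t)
        = (V T).det := (det_smul_one_add_sum_vecMulVec_self_eq_prod hlam hV T).symm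
    _ ≤ ((V T).trace / Fintype.card n) ^ Fintype.card n := hVT.det_le_trace_div_card_pow
    _ ≤ ((Fintype.card n * lam + T) / Fintype.card n) ^ Fintype.card n := by
        have := hVT.trace_nonneg
        gcongr
    _ = lam ^ Fintype.card n * (1 + T / (Fintype.card n * lam)) ^ Fintype.card n := by
        rw [← mul_pow]
        field_simp

end Gram

theorem elliptical_potential_sum_general (d T : ℕ)
    (x : ℕ → Fin d → ℝ)
    (hx : ∀ t ∈ Finset.Icc 1 T, Real.sqrt (∑ i, (x t i) ^ 2) ≤ 1)
    (lam : ℝ) (hlam : 0 < lam)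
    (V : ℕ → Matrix (Fin d) (Fin d) ℝ)
    (hV : ∀ k, V k = lam • (1 : Matrix (Fin d) (Fin d) ℝ)
        + ∑ s ∈ Finset.Icc 1 k, Matrix.vecMulVec (x s) (x s))
    (hbound : ∀ t ∈ Finset.Icc 1 T, x t ⬝ᵥ (V (t - 1))⁻¹ *ᵥ x t ≤ 1) :
    ∑ t ∈ Finset.Icc 1 T, x t ⬝ᵥ (V (t - 1))⁻¹ *ᵥ x t
      ≤ 2 * d * Real.log (1 + T / (d * lam)) := by
  obtain rfl | hd := Nat.eq_zero_or_pos d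
  · simp
  have : Nonempty (Fin d) := Fin.pos_iff_nonempty.mp hd
  set u : ℕ → ℝ := fun t => x t ⬝ᵥ (V (t - 1))⁻¹ *ᵥ x t
  have hu_nonneg (t : ℕ) : 0 ≤ u t := by
    have hVpos := hV (t - 1) ▸ posDef_smul_one_add_sum_vecMulVec_self_s8 _ x hlam
    simpa using hVpos.inv.posSemidef.dotProduct_mulVec_nonneg (x t)
  have hprod : ∏ t ∈ Icc 1 T, (1 + u t) ≤ (1 + T / (d * lam)) ^ d := by
    simpa using prod_one_add_dotProduct_inv_mulVec_le hlam hV fun t ht => by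
      simpa [dotProduct, sq] using hx t ht
  calc ∑ t ∈ Icc 1 T, u t ≤ ∑ t ∈ Icc 1 T, 2 * Real.log (1 + u t) :=
        sum_le_sum fun t ht => Real.le_two_mul_log_one_add (hu_nonneg t) (by linarith [hbound t ht])
    _ = 2 * Real.log (∏ t ∈ Icc 1 T, (1 + u t)) := by
        rw [← mul_sum, Real.log_prod fun t _ => by linarith [hu_nonneg t]]
    _ ≤ 2 * Real.log ((1 + T / (d * lam)) ^ d) := by
        gcongr
        exact prod_pos fun t _ => by linarith [hu_nonneg t]
    _ = 2 * d * Real.log (1 + T / (d * lam)) := by rw [Real.log_pow]; ring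

/-- Elliptical potential lemma, bounded-potential case. -/
theorem elliptical_potential_sum (d T : ℕ) (hd : 1 ≤ d) (hT : 1 ≤ T)
    (x : ℕ → Fin d → ℝ)
    (hx : ∀ t ∈ Finset.Icc 1 T, Real.sqrt (∑ i, (x t i) ^ 2) ≤ 1)
    (lam : ℝ) (hlam : 0 < lam)
    (V : ℕ → Matrix (Fin d) (Fin d) ℝ)
    (hV : ∀ k, V k = lam • (1 : Matrix (Fin d) (Fin d) ℝ)
        + ∑ s ∈ Finset.Icc 1 k, Matrix.vecMulVec (x s) (x s))
    (hbound : ∀ t ∈ Finset.Icc 1 T, x t ⬝ᵥ (V (t - 1))⁻¹ *ᵥ x t ≤ 1) :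
    ∑ t ∈ Finset.Icc 1 T, x t ⬝ᵥ (V (t - 1))⁻¹ *ᵥ x t
      ≤ 2 * d * Real.log (1 + T / (d * lam)) :=
  elliptical_potential_sum_general d T x hx lam hlam V hV hbound
end

section
/- Let d ≥ 1, let A be a symmetric positive definite d×d real matrix, let t ≥ 1, and let x_1, …, x_t ∈ ℝ^d be vectors with x_sᵀ A⁻¹ x_s ≤ 1 for every s ∈ [t]. Then det( Σ_{s=1}^t x_s x_sᵀ ) ≤ (t/d)^d · det(A). -/
/-! Write `A⁻¹ = Bᴴ B`. Conjugating `S = ∑ₛ xₛ xₛᵀ` by `B` gives the positive semidefinite matrix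
`B S Bᴴ`, whose determinant is `det S / det A` and whose trace is `∑ₛ xₛᵀ A⁻¹ xₛ ≤ t`.
AM–GM on its eigenvalues bounds that determinant by `(t / d) ^ d`. -/

open Matrix Finset

theorem Real.prod_le_arith_mean_pow {ι : Type*} (s : Finset ι) {z : ι → ℝ}
    (hz : ∀ i ∈ s, 0 ≤ z i) : ∏ i ∈ s, z i ≤ ((∑ i ∈ s, z i) / #s) ^ #s := by
  rcases s.eq_empty_or_nonempty with rfl | hs
  · simp
  have hgm := Real.geom_mean_le_arith_mean s 1 z (fun _ _ => zero_le_one)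
    (by simpa using hs.card_pos) hz
  simp only [Pi.one_apply, Real.rpow_one, one_mul, sum_const, nsmul_eq_mul, mul_one] at hgm
  calc ∏ i ∈ s, z i = ((∏ i ∈ s, z i) ^ (#s : ℝ)⁻¹) ^ #s :=
        (Real.rpow_inv_natCast_pow (prod_nonneg hz) hs.card_pos.ne').symm
    _ ≤ ((∑ i ∈ s, z i) / #s) ^ #s := pow_le_pow_left₀ (by positivity [prod_nonneg hz]) hgm _

namespace Matrix

theorem trace_mul_vecMulVec {n R : Type*} [Fintype n] [CommSemiring R]
    (M : Matrix n n R) (x y : n → R) : (M * vecMulVec x y).trace = y ⬝ᵥ M *ᵥ x := by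
  rw [mul_vecMulVec, trace_vecMulVec, dotProduct_comm]

variable {n : Type*} [Fintype n] [DecidableEq n]

theorem PosSemidef.det_le_trace_div_card_pow_s10 {M : Matrix n n ℝ} (hM : M.PosSemidef) :
    M.det ≤ (M.trace / Fintype.card n) ^ Fintype.card n := by
  rw [hM.isHermitian.det_eq_prod_eigenvalues, hM.isHermitian.trace_eq_sum_eigenvalues]
  simpa using Real.prod_le_arith_mean_pow univ fun i _ => hM.eigenvalues_nonneg i

open scoped MatrixOrder in
theorem PosSemidef.det_le_trace_inv_mul_div_card_pow_mul_det {A S : Matrix n n ℝ}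
    (hA : A.PosDef) (hS : S.PosSemidef) :
    S.det ≤ ((A⁻¹ * S).trace / Fintype.card n) ^ Fintype.card n * A.det := by
  obtain ⟨B, hB⟩ := CStarAlgebra.nonneg_iff_eq_star_mul_self.mp hA.inv.posSemidef.nonneg
  rw [star_eq_conjTranspose] at hB
  have htrace : (B * S * Bᴴ).trace = (A⁻¹ * S).trace := by
    rw [trace_mul_cycle, hB]
  have hdet : (B * S * Bᴴ).det * A.det = S.det := by
    calc (B * S * Bᴴ).det * A.det = S.det * ((Bᴴ * B).det * A.det) := by
          simp only [det_mul]; ring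
      _ = S.det := by rw [← hB, det_nonsing_inv_mul_det _ hA.det_pos.ne'.isUnit, mul_one]
  rw [← hdet, ← htrace]
  exact mul_le_mul_of_nonneg_right
    (hS.mul_mul_conjTranspose_same B).det_le_trace_div_card_pow_s10 hA.det_pos.le

end Matrix

theorem det_le_of_leverage_le_one_general (d t : ℕ)
    (A : Matrix (Fin d) (Fin d) ℝ) (hA : A.PosDef)
    (x : ℕ → Fin d → ℝ)
    (hx : ∀ s ∈ Finset.Icc 1 t, x s ⬝ᵥ A⁻¹ *ᵥ x s ≤ 1) :
    (∑ s ∈ Finset.Icc 1 t, Matrix.vecMulVec (x s) (x s)).det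
      ≤ ((t : ℝ) / d) ^ d * A.det := by
  set S := ∑ s ∈ Icc 1 t, vecMulVec (x s) (x s)
  have hS : S.PosSemidef := posSemidef_sum _ fun s _ => by
    simpa using posSemidef_vecMulVec_self_star (x s)
  have htrace : (A⁻¹ * S).trace = ∑ s ∈ Icc 1 t, x s ⬝ᵥ A⁻¹ *ᵥ x s := by
    simp only [S, mul_sum, trace_sum, trace_mul_vecMulVec]
  have htrace_nonneg : 0 ≤ (A⁻¹ * S).trace := htrace ▸ sum_nonneg fun s _ => by
    simpa using hA.inv.posSemidef.dotProduct_mulVec_nonneg (x s)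
  have htrace_le : (A⁻¹ * S).trace ≤ t := htrace ▸ (sum_le_sum hx).trans (by simp)
  calc S.det ≤ ((A⁻¹ * S).trace / d) ^ d * A.det := by
        simpa using hS.det_le_trace_inv_mul_div_card_pow_mul_det hA
    _ ≤ ((t : ℝ) / d) ^ d * A.det := mul_le_mul_of_nonneg_right (by gcongr) hA.det_pos.le

/-- Determinant bound for a design matrix whose vectors have bounded `A`-leverage. -/
theorem det_le_of_leverage_le_one (d t : ℕ) (hd : 1 ≤ d) (ht : 1 ≤ t)
    (A : Matrix (Fin d) (Fin d) ℝ) (hA : A.PosDef)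
    (x : ℕ → Fin d → ℝ)
    (hx : ∀ s ∈ Finset.Icc 1 t, x s ⬝ᵥ A⁻¹ *ᵥ x s ≤ 1) :
    (∑ s ∈ Finset.Icc 1 t, Matrix.vecMulVec (x s) (x s)).det
      ≤ ((t : ℝ) / d) ^ d * A.det :=
  det_le_of_leverage_le_one_general d t A hA x hx
end
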